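/- arXiv:1910.06550 — 2 statements merged into one kernel-verified Lean document; each statement's English description precedes it below -/
import Mathlib

section
/- Let f : ℝ → ℝ satisfy f(s)=0 for s≤0 and f continuous and strictly increasing on [0,∞), and let F(s) = ∫₀^s f⁻¹(r) dr where f⁻¹ is the inverse of f on [0,∞) extended by 0. Then the following are equivalent: (i) there exists δ₀ ∈ (0,1) such that ∫₀^s f(r) dr ≤ δ₀ f(s) s for all s ≥ 0; (ii) there exists δ₁ ∈ (0,1) such that F(s) ≥ δ₁ s f⁻¹(s) for all s ≥ 0. -/
/-!
Both conditions are rearrangements of Young's equality `∫₀^s f + ∫₀^{f s} f⁻¹ = s f(s)`: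
condition (i) at `s` is condition (ii) at `f s` with `δ₁ = 1 - δ₀`, and conversely.
Young's equality holds because on a step `[a, b]` both integrals lie between their lower and
upper rectangle sums, so the defect `t f(t) - ∫₀^t f - ∫₀^{f t} f⁻¹` changes by at most
`(b - a)(f b - f a)`; along a uniform partition of `[0, s]` into `n` steps these changes add up
to at most `s f(s) / n`.
-/

open Set intervalIntegral MeasureTheory Filter

theorem MonotoneOn.mul_le_intervalIntegral {f : ℝ → ℝ} {a b : ℝ} (hab : a ≤ b)
    (hf : MonotoneOn f (Icc a b)) : (b - a) * f a ≤ ∫ x in a..b, f x := by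
  have hfi : IntervalIntegrable f volume a b := by
    rw [← uIcc_of_le hab] at hf
    exact hf.intervalIntegrable
  simpa using integral_mono_on hab intervalIntegrable_const hfi
    fun x hx => hf ⟨le_rfl, hab⟩ hx hx.1

theorem MonotoneOn.intervalIntegral_le_mul {f : ℝ → ℝ} {a b : ℝ} (hab : a ≤ b)
    (hf : MonotoneOn f (Icc a b)) : (∫ x in a..b, f x) ≤ (b - a) * f b := by
  have hfi : IntervalIntegrable f volume a b := by
    rw [← uIcc_of_le hab] at hf
    exact hf.intervalIntegrable
  simpa using integral_mono_on hab hfi intervalIntegrable_const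
    fun x hx => hf hx ⟨hab, le_rfl⟩ hx.2

theorem abs_mul_sub_integral_sub_integral_inv_le {f g : ℝ → ℝ} {a b : ℝ} (hab : a ≤ b)
    (hf : MonotoneOn f (Icc a b)) (hg : MonotoneOn g (Icc (f a) (f b)))
    (hga : g (f a) = a) (hgb : g (f b) = b) :
    |b * f b - a * f a - (∫ x in a..b, f x) - ∫ y in f a..f b, g y|
      ≤ (b - a) * (f b - f a) := by
  have hfab : f a ≤ f b := hf ⟨le_rfl, hab⟩ ⟨hab, le_rfl⟩ hab
  have hf₁ := hf.mul_le_intervalIntegral hab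
  have hf₂ := hf.intervalIntegral_le_mul hab
  have hg₁ := hg.mul_le_intervalIntegral hfab
  have hg₂ := hg.intervalIntegral_le_mul hfab
  rw [hga] at hg₁
  rw [hgb] at hg₂
  rw [abs_le]
  constructor <;> nlinarith

theorem eq_of_abs_sub_le_mul_sub {H g : ℝ → ℝ} {a b : ℝ} (hab : a ≤ b)
    (hH : ∀ x ∈ Icc a b, ∀ y ∈ Icc a b, x ≤ y → |H y - H x| ≤ (y - x) * (g y - g x)) :
    H b = H a := by
  have hbound : ∀ n : ℕ, 1 ≤ n → |H b - H a| ≤ (b - a) * (g b - g a) / n := by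
    intro n hn
    have hn₀ : (0 : ℝ) < n := by exact_mod_cast hn
    set x : ℕ → ℝ := fun i => a + (b - a) * i / n
    have hx₀ : x 0 = a := by simp [x]
    have hxn : x n = b := by simp only [x]; field_simp; ring
    have hstep : ∀ i, x (i + 1) - x i = (b - a) / n := by intro i; simp only [x]; push_cast; ring
    have hmem : ∀ i ≤ n, x i ∈ Icc a b := by
      intro i hi
      have hi' : (i : ℝ) / n ≤ 1 := (div_le_one hn₀).mpr (by exact_mod_cast hi)
      have hi₀ : 0 ≤ (i : ℝ) / n := by positivity
      constructor <;> simp only [x, mul_div_assoc] <;> nlinarith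
    calc |H b - H a| = |∑ i ∈ Finset.range n, (H (x (i + 1)) - H (x i))| := by
          rw [Finset.sum_range_sub (fun i => H (x i)), hx₀, hxn]
      _ ≤ ∑ i ∈ Finset.range n, |H (x (i + 1)) - H (x i)| := Finset.abs_sum_le_sum_abs _ _
      _ ≤ ∑ i ∈ Finset.range n, (b - a) / n * (g (x (i + 1)) - g (x i)) := by
          gcongr with i hi
          have hi := Finset.mem_range.mp hi
          rw [← hstep i]
          refine hH _ (hmem i hi.le) _ (hmem (i + 1) hi) ?_
          linarith [hstep i, div_nonneg (sub_nonneg.mpr hab) hn₀.le]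
      _ = (b - a) * (g b - g a) / n := by
          rw [← Finset.mul_sum, Finset.sum_range_sub (fun i => g (x i)), hx₀, hxn]
          ring
  have hle : |H b - H a| ≤ 0 :=
    ge_of_tendsto (tendsto_const_div_atTop_nhds_zero_nat _) (eventually_atTop.mpr ⟨1, hbound⟩)
  exact sub_eq_zero.mp (abs_nonpos_iff.mp hle)

theorem integral_add_integral_inv_eq_mul {f g : ℝ → ℝ} (hf : MonotoneOn f (Ici 0))
    (hf0 : f 0 = 0) (hg : MonotoneOn g (Ici 0)) (hgf : ∀ x ≥ 0, g (f x) = x) {s : ℝ}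
    (hs : 0 ≤ s) :
    (∫ x in (0:ℝ)..s, f x) + ∫ y in (0:ℝ)..f s, g y = s * f s := by
  have hf_nonneg : ∀ x ≥ 0, 0 ≤ f x := fun x hx => hf0 ▸ hf self_mem_Ici hx hx
  have hint : ∀ {u : ℝ → ℝ}, MonotoneOn u (Ici 0) → ∀ {x y : ℝ}, 0 ≤ x → 0 ≤ y →
      IntervalIntegrable u volume x y := fun hu _ _ hx hy =>
    (hu.mono fun _ hz => (le_min hx hy).trans hz.1).intervalIntegrable
  set H : ℝ → ℝ := fun t => t * f t - (∫ x in (0:ℝ)..t, f x) - ∫ y in (0:ℝ)..f t, g y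
  suffices H s = H 0 by simp only [H, hf0, integral_same] at this; linarith
  refine eq_of_abs_sub_le_mul_sub (g := f) hs fun a ha b hb hab => ?_
  have hfa := hf_nonneg a ha.1
  have hfb := hf_nonneg b hb.1
  have hsplit : H b - H a
      = b * f b - a * f a - (∫ x in a..b, f x) - ∫ y in f a..f b, g y := by
    simp only [H]
    rw [← integral_add_adjacent_intervals (hint hf le_rfl ha.1) (hint hf ha.1 hb.1),
      ← integral_add_adjacent_intervals (hint hg le_rfl hfa) (hint hg hfa hfb)]
    ring
  rw [hsplit]
  exact abs_mul_sub_integral_sub_integral_inv_le hab (hf.mono fun _ hx => ha.1.trans hx.1)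
    (hg.mono fun _ hy => hfa.trans hy.1) (hgf a ha.1) (hgf b hb.1)

theorem H3_iff_H3'_general (f finv : ℝ → ℝ)
    (hf0 : ∀ s ≤ (0:ℝ), f s = 0)
    (hfm : StrictMonoOn f (Ici 0))
    (hinvl : ∀ s ≥ (0:ℝ), finv (f s) = s)
    (hinvr : ∀ r ≥ (0:ℝ), f (finv r) = r)
    (F : ℝ → ℝ) (hF : ∀ s, F s = ∫ r in (0:ℝ)..s, finv r) :
    (∃ δ₀ ∈ Ioo (0:ℝ) 1, ∀ s ≥ (0:ℝ), (∫ r in (0:ℝ)..s, f r) ≤ δ₀ * (f s * s)) ↔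
      (∃ δ₁ ∈ Ioo (0:ℝ) 1, ∀ s ≥ (0:ℝ), δ₁ * (s * finv s) ≤ F s) := by
  have hf_mono : MonotoneOn f (Ici 0) := hfm.monotoneOn
  have hf_nonneg : ∀ s ≥ (0:ℝ), 0 ≤ f s := fun s hs => hf0 0 le_rfl ▸ hf_mono self_mem_Ici hs hs
  have hinv_nonneg : ∀ r ≥ (0:ℝ), 0 ≤ finv r := by
    intro r hr
    by_contra! h
    obtain rfl : r = 0 := by rw [← hinvr r hr, hf0 _ h.le]
    have h0 := hinvl 0 le_rfl
    rw [hf0 0 le_rfl] at h0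
    linarith
  have hinv_mono : MonotoneOn finv (Ici 0) :=
    Function.monotoneOn_of_rightInvOn_of_mapsTo hf_mono hinvr hinv_nonneg
  have young := fun s (hs : 0 ≤ s) =>
    integral_add_integral_inv_eq_mul hf_mono (hf0 0 le_rfl) hinv_mono hinvl hs
  simp only [hF]
  constructor
  · rintro ⟨δ, ⟨hδ0, hδ1⟩, hδ⟩
    refine ⟨1 - δ, ⟨by linarith, by linarith⟩, fun s hs => ?_⟩
    have hy := young (finv s) (hinv_nonneg s hs)
    have hi := hδ (finv s) (hinv_nonneg s hs)
    rw [hinvr s hs] at hy hi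
    linarith
  · rintro ⟨δ, ⟨hδ0, hδ1⟩, hδ⟩
    refine ⟨1 - δ, ⟨by linarith, by linarith⟩, fun s hs => ?_⟩
    have hy := young s hs
    have hii := hδ (f s) (hf_nonneg s hs)
    rw [hinvl s hs] at hii
    linarith

/-- Equivalence of hypotheses (H3) and (H3)': for `f` vanishing on `(-∞,0]`, continuous and
strictly increasing on `[0,∞)`, with (two-sided) inverse `finv` extended by `0`, and
`F s = ∫₀^s f⁻¹`, one has
`(∃ δ₀ ∈ (0,1), ∀ s ≥ 0, ∫₀^s f ≤ δ₀ f(s) s) ↔ (∃ δ₁ ∈ (0,1), ∀ s ≥ 0, F s ≥ δ₁ s f⁻¹(s))`. -/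
theorem H3_iff_H3' (f finv : ℝ → ℝ)
    (hf0 : ∀ s ≤ (0:ℝ), f s = 0)
    (hfc : ContinuousOn f (Ici 0))
    (hfm : StrictMonoOn f (Ici 0))
    (hinv0 : ∀ r ≤ (0:ℝ), finv r = 0)
    (hinvl : ∀ s ≥ (0:ℝ), finv (f s) = s)
    (hinvr : ∀ r ≥ (0:ℝ), f (finv r) = r)
    (F : ℝ → ℝ) (hF : ∀ s, F s = ∫ r in (0:ℝ)..s, finv r) :
    (∃ δ₀ ∈ Ioo (0:ℝ) 1, ∀ s ≥ (0:ℝ), (∫ r in (0:ℝ)..s, f r) ≤ δ₀ * (f s * s)) ↔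
      (∃ δ₁ ∈ Ioo (0:ℝ) 1, ∀ s ≥ (0:ℝ), δ₁ * (s * finv s) ≤ F s) :=
  H3_iff_H3'_general f finv hf0 hfm hinvl hinvr F hF
end

section
/- If f : ℝ → ℝ is continuous and strictly increasing on [0,∞) with f(0)=0, and there exists δ₀ ∈ (0,1) with ∫₀^s f(r) dr ≤ δ₀ f(s) s for all s ≥ 0, and f is not identically zero on [0,∞), then f(s) → +∞ as s → +∞. -/
open Set Filter

/-! Splitting `∫₀^s f` at `c s` and bounding `f` below by `f (c s)` on `[c s, s]` turns (H3) into
`(1 - c) f(c s) ≤ δ₀ f(s)`. For `c < 1 - δ₀` this says that `f` grows by a fixed factor `λ > 1`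
each time its argument is multiplied by `1 / c`, so `f (c⁻¹ ^ n) ≥ λ ^ n f 1 → ∞`. -/

theorem MonotoneOn.sub_mul_le_integral {f : ℝ → ℝ} (hfm : MonotoneOn f (Ici 0)) (hf0 : 0 ≤ f 0)
    {a s : ℝ} (ha : 0 ≤ a) (has : a ≤ s) : (s - a) * f a ≤ ∫ r in (0:ℝ)..s, f r := by
  have hint : ∀ u v : ℝ, 0 ≤ u → u ≤ v → IntervalIntegrable f MeasureTheory.volume u v :=
    fun u v hu huv => (hfm.mono fun x hx => hu.trans (uIcc_of_le huv ▸ hx).1).intervalIntegrable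
  calc (s - a) * f a = ∫ _ in a..s, f a := by simp
    _ ≤ ∫ r in a..s, f r :=
        intervalIntegral.integral_mono_on has intervalIntegrable_const (hint a s ha has)
          fun x hx => hfm ha (ha.trans hx.1) hx.1
    _ ≤ (∫ r in (0:ℝ)..a, f r) + ∫ r in a..s, f r :=
        le_add_of_nonneg_left <| intervalIntegral.integral_nonneg ha
          fun x hx => hf0.trans (hfm self_mem_Ici hx.1 hx.1)
    _ = ∫ r in (0:ℝ)..s, f r :=
        intervalIntegral.integral_add_adjacent_intervals (hint 0 a le_rfl ha) (hint a s ha has)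

theorem MonotoneOn.one_sub_mul_le_of_integral_le {f : ℝ → ℝ} (hfm : MonotoneOn f (Ici 0))
    (hf0 : 0 ≤ f 0) {δ c s : ℝ} (hc0 : 0 ≤ c) (hc1 : c ≤ 1) (hs : 0 < s)
    (hH3 : (∫ r in (0:ℝ)..s, f r) ≤ δ * (f s * s)) : (1 - c) * f (c * s) ≤ δ * f s := by
  have h := hfm.sub_mul_le_integral hf0 (mul_nonneg hc0 hs.le)
    (mul_le_of_le_one_left hs.le hc1)
  have : ((1 - c) * f (c * s)) * s ≤ (δ * f s) * s := by linarith
  exact le_of_mul_le_mul_right this hs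

theorem MonotoneOn.tendsto_atTop_of_mul_le_comp_mul {f : ℝ → ℝ} {c l : ℝ}
    (hfm : MonotoneOn f (Ici 0)) (hc0 : 0 < c) (hl : 1 < l) (hf1 : 0 < f 1)
    (h : ∀ s > 0, l * f (c * s) ≤ f s) : Tendsto f atTop atTop := by
  have hgeom : ∀ n : ℕ, l ^ n * f 1 ≤ f (c⁻¹ ^ n) := by
    intro n
    induction n with
    | zero => simp
    | succ n ih =>
      calc l ^ (n + 1) * f 1 = l * (l ^ n * f 1) := by ring
        _ ≤ l * f (c⁻¹ ^ n) := mul_le_mul_of_nonneg_left ih (by linarith)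
        _ = l * f (c * c⁻¹ ^ (n + 1)) := by rw [pow_succ', mul_inv_cancel_left₀ hc0.ne']
        _ ≤ f (c⁻¹ ^ (n + 1)) := h _ (by positivity)
  rw [tendsto_atTop_atTop]
  intro M
  obtain ⟨n, hn⟩ :=
    (((tendsto_pow_atTop_atTop_of_one_lt hl).atTop_mul_const hf1).eventually_ge_atTop M).exists
  have hpos : (0:ℝ) ≤ c⁻¹ ^ n := by positivity
  exact ⟨c⁻¹ ^ n, fun s hs => hn.trans ((hgeom n).trans (hfm hpos (hpos.trans hs) hs))⟩

theorem tendsto_atTop_of_H3_general (f : ℝ → ℝ)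
    (hfm : StrictMonoOn f (Ici 0))
    (hf0 : f 0 = 0)
    (hH3 : ∃ δ₀ ∈ Ioo (0:ℝ) 1, ∀ s ≥ (0:ℝ), (∫ r in (0:ℝ)..s, f r) ≤ δ₀ * (f s * s)) :
    Tendsto f atTop atTop := by
  obtain ⟨δ₀, ⟨hδ0, hδ1⟩, hH3⟩ := hH3
  set c : ℝ := (1 - δ₀) / 2
  have hc0 : 0 < c := by simp only [c]; linarith
  have hδc : δ₀ < 1 - c := by simp only [c]; linarith
  have hgrowth : ∀ s > 0, (1 - c) / δ₀ * f (c * s) ≤ f s := fun s hs => by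
    rw [div_mul_eq_mul_div, div_le_iff₀ hδ0, mul_comm (f s)]
    exact hfm.monotoneOn.one_sub_mul_le_of_integral_le hf0.ge hc0.le (by linarith) hs
      (hH3 s hs.le)
  have hf1 : 0 < f 1 := hf0 ▸ hfm self_mem_Ici (mem_Ici.2 zero_le_one) one_pos
  exact hfm.monotoneOn.tendsto_atTop_of_mul_le_comp_mul hc0 ((one_lt_div hδ0).2 hδc) hf1 hgrowth

/-- If `f` is continuous and strictly increasing on `[0,∞)` with `f 0 = 0`, satisfies (H3),
and is not identically zero on `[0,∞)`, then `f(s) → +∞` as `s → +∞`. -/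
theorem tendsto_atTop_of_H3 (f : ℝ → ℝ)
    (hfc : ContinuousOn f (Ici 0))
    (hfm : StrictMonoOn f (Ici 0))
    (hf0 : f 0 = 0)
    (hH3 : ∃ δ₀ ∈ Ioo (0:ℝ) 1, ∀ s ≥ (0:ℝ), (∫ r in (0:ℝ)..s, f r) ≤ δ₀ * (f s * s))
    (hne : ¬ ∀ s ≥ (0:ℝ), f s = 0) :
    Tendsto f atTop atTop :=
  tendsto_atTop_of_H3_general f hfm hf0 hH3
end
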